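/- arXiv:0808.0588 — 2 statements merged into one kernel-verified Lean document; each statement's English description precedes it below -/
import Mathlib

section
/- Let M be a 4×4 complex matrix with eigenvalues τ₁, τ₁⁻¹, τ₂, τ₂⁻¹ (nonzero), T₁ = (1/4)Tr M, T₂ = (1/4)Tr M², and define D_± = (1/4)det(M ∓ I). Then D_± = ((2T₁ ∓ 1)² − T₂)/2, and consequently D_+ − D_− = −4T₁. -/
/-!
The hypothesis says that the characteristic polynomial of `M` is `∏ (X - μᵢ)` with
`μ = (τ₁, τ₁⁻¹, τ₂, τ₂⁻¹)`, so `tr M = Σ μᵢ`. Since `M² - τ² = (M - τ)(M + τ)` and every complex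
number is a square, `M²` has eigenvalues `μᵢ²`, whence `tr M² = Σ μᵢ²`. With `x = τ₁ + τ₁⁻¹` and
`y = τ₂ + τ₂⁻¹` this gives `4 T₁ = x + y`, `4 T₂ = x² + y² - 4` and
`det (M - t) = (1 - t x + t²)(1 - t y + t²)`, after which all three claims are polynomial
identities in `x` and `y`.
-/

open Polynomial

namespace Matrix

variable {n K : Type*} [Fintype n] [DecidableEq n] [Field K]

theorem charpoly_eq_prod_of_det_sub_smul [Infinite K] {A : Matrix n n K} {μ : n → K}
    (h : ∀ τ : K, (A - τ • (1 : Matrix n n K)).det = ∏ i, (μ i - τ)) :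
    A.charpoly = ∏ i, (X - C (μ i)) := by
  refine Polynomial.funext fun τ => ?_
  have hneg : scalar n τ - A = -(A - τ • (1 : Matrix n n K)) := by
    rw [neg_sub, scalar_apply, smul_one_eq_diagonal]
  rw [eval_charpoly, hneg, det_neg, h, eval_prod, ← Finset.card_univ, ← Finset.prod_const,
    ← Finset.prod_mul_distrib]
  simp

theorem trace_eq_sum_of_det_sub_smul [Infinite K] {A : Matrix n n K} {μ : n → K}
    (h : ∀ τ : K, (A - τ • (1 : Matrix n n K)).det = ∏ i, (μ i - τ)) :
    A.trace = ∑ i, μ i := by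
  rw [trace_eq_neg_charpoly_nextCoeff, charpoly_eq_prod_of_det_sub_smul h,
    prod_X_sub_C_nextCoeff, neg_neg]

theorem det_mul_self_sub_smul [IsAlgClosed K] {A : Matrix n n K} {μ : n → K}
    (h : ∀ τ : K, (A - τ • (1 : Matrix n n K)).det = ∏ i, (μ i - τ)) (s : K) :
    (A * A - s • (1 : Matrix n n K)).det = ∏ i, (μ i ^ 2 - s) := by
  obtain ⟨τ, rfl⟩ := IsAlgClosed.exists_eq_mul_self s
  have hfactor : A * A - (τ * τ) • (1 : Matrix n n K)
      = (A - τ • (1 : Matrix n n K)) * (A - (-τ) • (1 : Matrix n n K)) := by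
    rw [neg_smul, sub_neg_eq_add, ← ((Commute.one_right A).smul_right τ).mul_self_sub_mul_self_eq',
      smul_mul_smul_comm, one_mul]
  rw [hfactor, det_mul, h, h, ← Finset.prod_mul_distrib]
  exact Finset.prod_congr rfl fun i _ => by ring

theorem trace_mul_self_eq_sum_sq_of_det_sub_smul [IsAlgClosed K] {A : Matrix n n K}
    {μ : n → K} (h : ∀ τ : K, (A - τ • (1 : Matrix n n K)).det = ∏ i, (μ i - τ)) :
    (A * A).trace = ∑ i, μ i ^ 2 :=
  trace_eq_sum_of_det_sub_smul (det_mul_self_sub_smul h)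

end Matrix

section Reciprocal

variable {K : Type*} [Field K] {a : K}

theorem sub_mul_inv_sub (ha : a ≠ 0) (t : K) :
    (a - t) * (a⁻¹ - t) = 1 - t * (a + a⁻¹) + t ^ 2 := by
  linear_combination mul_inv_cancel₀ ha

theorem sq_add_inv_sq (ha : a ≠ 0) : a ^ 2 + a⁻¹ ^ 2 = (a + a⁻¹) ^ 2 - 2 := by
  linear_combination -2 * mul_inv_cancel₀ ha

end Reciprocal

/-- D_± = (1/4)det(M ∓ I) = ((2T₁ ∓ 1)² − T₂)/2, hence D₊ − D₋ = −4T₁. -/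
theorem stmt_14 (M : Matrix (Fin 4) (Fin 4) ℂ) (τ₁ τ₂ : ℂ) (h1 : τ₁ ≠ 0) (h2 : τ₂ ≠ 0)
    (hev : ∀ τ : ℂ, (M - τ • (1 : Matrix (Fin 4) (Fin 4) ℂ)).det
      = (τ₁ - τ) * (τ₁⁻¹ - τ) * (τ₂ - τ) * (τ₂⁻¹ - τ)) :
    (1 : ℂ) / 4 * (M - 1).det
        = ((2 * ((1 : ℂ) / 4 * Matrix.trace M) - 1) ^ 2
            - (1 : ℂ) / 4 * Matrix.trace (M * M)) / 2 ∧
    (1 : ℂ) / 4 * (M + 1).det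
        = ((2 * ((1 : ℂ) / 4 * Matrix.trace M) + 1) ^ 2
            - (1 : ℂ) / 4 * Matrix.trace (M * M)) / 2 ∧
    (1 : ℂ) / 4 * (M - 1).det - (1 : ℂ) / 4 * (M + 1).det
        = -4 * ((1 : ℂ) / 4 * Matrix.trace M) := by
  have hμ : ∀ τ : ℂ, (M - τ • (1 : Matrix (Fin 4) (Fin 4) ℂ)).det
      = ∏ i, (![τ₁, τ₁⁻¹, τ₂, τ₂⁻¹] i - τ) := fun τ => by
    rw [hev, Fin.prod_univ_four]; rfl
  have htr : M.trace = τ₁ + τ₁⁻¹ + (τ₂ + τ₂⁻¹) := by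
    rw [Matrix.trace_eq_sum_of_det_sub_smul hμ, Fin.sum_univ_four, ← add_assoc]; rfl
  have htr_sq : (M * M).trace = (τ₁ + τ₁⁻¹) ^ 2 - 2 + ((τ₂ + τ₂⁻¹) ^ 2 - 2) := by
    rw [Matrix.trace_mul_self_eq_sum_sq_of_det_sub_smul hμ, Fin.sum_univ_four, ← sq_add_inv_sq h1,
      ← sq_add_inv_sq h2, ← add_assoc]; rfl
  have hdet : ∀ t : ℂ, (M - t • (1 : Matrix (Fin 4) (Fin 4) ℂ)).det
      = (1 - t * (τ₁ + τ₁⁻¹) + t ^ 2) * (1 - t * (τ₂ + τ₂⁻¹) + t ^ 2) := fun t => by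
    rw [hev, mul_assoc (_ * _), sub_mul_inv_sub h1, sub_mul_inv_sub h2]
  have hdet_sub := hdet 1
  have hdet_add := hdet (-1)
  rw [one_smul] at hdet_sub
  rw [neg_smul, one_smul, sub_neg_eq_add] at hdet_add
  rw [hdet_sub, hdet_add, htr, htr_sq]
  exact ⟨by ring, by ring, by ring⟩
end

section
/- For complex z with |z − πn| ≥ π/4 for every integer n, the estimate e^{|Im z|} < 4|sin z| holds. -/
/-!
Write `z = x + iy`, so that `‖sin z‖² = sin² x + sinh² y`. If `e^{2|y|} > 2`, then already
`e^{|y|} < 4 sinh |y| ≤ 4 ‖sin z‖`. Otherwise `e^{|y|} < 2`, and it suffices that `‖sin z‖ ≥ 1/2`: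
after a translation by a multiple of `π`, which does not change `‖sin z‖`, we may assume `|x| ≤ π/2`;
then Jordan's inequality `|sin x| ≥ 2|x|/π` together with `sinh² y ≥ y²` gives
`‖sin z‖ ≥ (2/π) ‖z‖ ≥ (2/π) (π/4)`.
-/

open Real

namespace Complex

lemma norm_sin_sq (z : ℂ) : ‖sin z‖ ^ 2 = Real.sin z.re ^ 2 + Real.sinh z.im ^ 2 := by
  have hre : (sin z).re = Real.sin z.re * Real.cosh z.im := by
    rw [sin_eq]; simp [sin_ofReal_re, cosh_ofReal_re]
  have him : (sin z).im = Real.cos z.re * Real.sinh z.im := by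
    rw [sin_eq]; simp [cos_ofReal_re, sinh_ofReal_re]
  rw [Complex.sq_norm, normSq_apply, hre, him]
  linear_combination Real.sin z.re ^ 2 * Real.cosh_sq z.im
    + Real.sinh z.im ^ 2 * Real.sin_sq_add_cos_sq z.re

lemma norm_sin_sub_int_mul_pi (z : ℂ) (n : ℤ) : ‖sin (z - n * π)‖ = ‖sin z‖ := by
  simp [sin_antiperiodic.sub_int_mul_eq]

lemma sinh_abs_im_le_norm_sin (z : ℂ) : Real.sinh |z.im| ≤ ‖sin z‖ := by
  refine abs_le_of_sq_le_sq' ?_ (norm_nonneg _) |>.2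
  rw [norm_sin_sq, ← Real.abs_sinh, sq_abs]
  nlinarith [sq_nonneg (Real.sin z.re)]

lemma two_div_pi_mul_norm_le_norm_sin {z : ℂ} (hz : |z.re| ≤ π / 2) :
    2 / π * ‖z‖ ≤ ‖sin z‖ := by
  have hπ : 2 / π ≤ 1 := (div_le_one pi_pos).2 two_le_pi
  have hre : 2 / π * |z.re| ≤ |Real.sin z.re| := mul_abs_le_abs_sin hz
  have him : 2 / π * |z.im| ≤ |Real.sinh z.im| := by
    rw [Real.abs_sinh]
    calc 2 / π * |z.im| ≤ |z.im| := mul_le_of_le_one_left (abs_nonneg _) hπ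
      _ ≤ Real.sinh |z.im| := Real.self_le_sinh_iff.2 (abs_nonneg _)
  refine abs_le_of_sq_le_sq' ?_ (norm_nonneg _) |>.2
  rw [norm_sin_sq, mul_pow, Complex.sq_norm, normSq_apply]
  nlinarith [pow_le_pow_left₀ (by positivity) hre 2, pow_le_pow_left₀ (by positivity) him 2,
    sq_abs z.re, sq_abs z.im, sq_abs (Real.sin z.re), sq_abs (Real.sinh z.im)]

lemma exists_two_div_pi_mul_norm_sub_int_mul_pi_le_norm_sin (z : ℂ) :
    ∃ n : ℤ, 2 / π * ‖z - n * π‖ ≤ ‖sin z‖ := by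
  refine ⟨round (z.re / π), ?_⟩
  rw [← norm_sin_sub_int_mul_pi z (round (z.re / π))]
  apply two_div_pi_mul_norm_le_norm_sin
  have hround := abs_sub_round (z.re / π)
  have hre : (z - round (z.re / π) * π).re = (z.re / π - round (z.re / π)) * π := by
    simp only [sub_re, mul_re, intCast_re, ofReal_re, intCast_im, ofReal_im, mul_zero, sub_zero]
    field_simp
  rw [hre, abs_mul, abs_of_pos pi_pos]
  nlinarith [pi_pos]

end Complex

lemma Real.exp_lt_four_mul_sinh {y : ℝ} (hy : log 2 < 2 * y) : exp y < 4 * sinh y := by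
  have h2 : 2 < exp y * exp y := by
    rw [← exp_add, ← two_mul]
    exact (log_lt_iff_lt_exp two_pos).1 hy
  have hinv : exp (-y) * exp y = 1 := by rw [← exp_add]; simp
  rw [sinh_eq]
  nlinarith [exp_pos y, exp_pos (-y)]

/-- If |z − πn| ≥ π/4 for every integer n, then e^{|Im z|} < 4|sin z|. -/
theorem stmt_19 (z : ℂ) (h : ∀ n : ℤ, Real.pi / 4 ≤ ‖z - (n : ℂ) * Real.pi‖) :
    Real.exp |z.im| < 4 * ‖Complex.sin z‖ := by
  rcases le_or_gt (2 * |z.im|) (log 2) with hsmall | hlarge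
  · obtain ⟨n, hn⟩ := Complex.exists_two_div_pi_mul_norm_sub_int_mul_pi_le_norm_sin z
    have hsin : 1 / 2 ≤ ‖Complex.sin z‖ :=
      calc 1 / 2 = 2 / π * (π / 4) := by field_simp; norm_num
        _ ≤ 2 / π * ‖z - n * π‖ := by gcongr; exact h n
        _ ≤ ‖Complex.sin z‖ := hn
    have hexp : exp |z.im| < 2 :=
      calc exp |z.im| < exp (log 2) :=
            exp_lt_exp.2 (by linarith [abs_nonneg z.im, log_pos one_lt_two])
        _ = 2 := exp_log two_pos
    linarith
  · calc exp |z.im| < 4 * sinh |z.im| := exp_lt_four_mul_sinh hlarge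
      _ ≤ 4 * ‖Complex.sin z‖ := by gcongr; exact Complex.sinh_abs_im_le_norm_sin z
end
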